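/- Let μ be a Borel probability measure on ℝ with compact support which is not a point mass, let α ∈ (0,1), c ∈ ℝ, and suppose there exists w ∈ ℂ ∖ ℝ with w·G_μ(w + c) = 1 − α. Then μ({c}) < 1 − α. -/

import Mathlib

/-!
Split off the atom at `c`: `μ = μ{c} δ_c + ν` with `ν := μ|_{ {c}ᶜ }`, so the hypothesis becomes
`μ{c} + w G_ν(w + c) = 1 - α`. Since `μ` is not a point mass, `ν ≠ 0`, and then `Im G_ν(z)` has the
sign of `-Im z`. Writing `w G_ν(w + c) = r` with `r` real gives `Im G_ν(w + c) = -r Im w / |w|²`,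
which forces `r = 1 - α - μ{c} > 0`.
-/

open MeasureTheory Complex

/-- The Cauchy (Stieltjes) transform of a measure on `ℝ`. -/
noncomputable def cauchyT (μ : Measure ℝ) (w : ℂ) : ℂ := ∫ t : ℝ, (w - (t : ℂ))⁻¹ ∂μ

lemma sub_ofReal_ne_zero {w : ℂ} (hw : w.im ≠ 0) (t : ℝ) : w - t ≠ 0 :=
  fun h => hw (by simpa using congrArg im h)

lemma norm_inv_sub_ofReal_le {w : ℂ} (hw : w.im ≠ 0) (t : ℝ) : ‖(w - t)⁻¹‖ ≤ |w.im|⁻¹ := by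
  rw [norm_inv]
  refine inv_anti₀ (abs_pos.mpr hw) ?_
  simpa using abs_im_le_norm (w - t)

lemma integrable_inv_sub_ofReal {w : ℂ} (hw : w.im ≠ 0) (μ : Measure ℝ) [IsFiniteMeasure μ] :
    Integrable (fun t : ℝ => (w - t)⁻¹) μ :=
  (integrable_const |w.im|⁻¹).mono'
    ((continuous_const.sub continuous_ofReal).inv₀ (sub_ofReal_ne_zero hw)).aestronglyMeasurable
    (.of_forall (norm_inv_sub_ofReal_le hw))

lemma integral_pos_of_forall_pos {X : Type*} [MeasurableSpace X] {μ : Measure X} (hμ : μ ≠ 0)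
    {f : X → ℝ} (hf : Integrable f μ) (hpos : ∀ t, 0 < f t) : 0 < ∫ t, f t ∂μ := by
  rw [integral_pos_iff_support_of_nonneg (fun t => (hpos t).le) hf,
    Function.support_eq_univ (fun t => (hpos t).ne')]
  exact Measure.measure_univ_pos.mpr hμ

lemma restrict_compl_singleton_ne_zero {X : Type*} [MeasurableSpace X]
    [MeasurableSingletonClass X] {μ : Measure X} [IsProbabilityMeasure μ] {c : X}
    (hμ : μ ≠ Measure.dirac c) : μ.restrict {c}ᶜ ≠ 0 := by
  intro h
  have hμc : μ = μ {c} • Measure.dirac c := by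
    conv_lhs => rw [← Measure.restrict_add_restrict_compl (μ := μ) (measurableSet_singleton c),
      h, add_zero, Measure.restrict_singleton]
  have hc : μ {c} = 1 := by simpa using congrArg (· Set.univ) hμc.symm
  exact hμ (by rwa [hc, one_smul] at hμc)

lemma cauchyT_eq_add_cauchyT_restrict_compl_singleton (μ : Measure ℝ) [IsFiniteMeasure μ]
    {w : ℂ} (hw : w.im ≠ 0) (c : ℝ) :
    cauchyT μ w = μ.real {c} * (w - c)⁻¹ + cauchyT (μ.restrict {c}ᶜ) w := by
  rw [cauchyT, cauchyT, ← integral_add_compl (measurableSet_singleton c)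
    (integrable_inv_sub_ofReal hw μ), integral_singleton, real_smul]

lemma im_inv_sub_ofReal_mul_im (w : ℂ) (t : ℝ) :
    (w - t)⁻¹.im * w.im = -(w.im ^ 2 / normSq (w - t)) := by
  simp only [inv_im, sub_im, ofReal_im, sub_zero]
  ring

lemma im_cauchyT_mul_im_neg {μ : Measure ℝ} [IsFiniteMeasure μ] (hμ : μ ≠ 0) {w : ℂ}
    (hw : w.im ≠ 0) : (cauchyT μ w).im * w.im < 0 := by
  have hint := integrable_inv_sub_ofReal hw μ
  have hpos : 0 < ∫ t, w.im ^ 2 / normSq (w - t) ∂μ := by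
    refine integral_pos_of_forall_pos hμ ?_ fun t =>
      div_pos (pow_pos (abs_pos.mpr hw) 2 |>.trans_eq (sq_abs _))
        (normSq_pos.mpr (sub_ofReal_ne_zero hw t))
    exact (hint.im.mul_const w.im).neg.congr
      (.of_forall fun t => neg_eq_iff_eq_neg.mpr (im_inv_sub_ofReal_mul_im w t))
  have him : (cauchyT μ w).im = ∫ t, (w - t)⁻¹.im ∂μ := (integral_im hint).symm
  rw [him, ← integral_mul_const]
  simp only [im_inv_sub_ofReal_mul_im, integral_neg]
  exact neg_neg_of_pos hpos

lemma pos_of_mul_eq_ofReal_of_im_mul_im_neg {w G : ℂ} {r : ℝ} (h : w * G = r)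
    (hG : G.im * w.im < 0) : 0 < r := by
  have hw : w ≠ 0 := by rintro rfl; simp at hG
  have hGw : G.im * w.im = -(r * (w.im ^ 2 / normSq w)) := by
    rw [eq_div_of_mul_eq hw (by rw [mul_comm, h] : G * w = r), div_im]
    simp only [ofReal_re, ofReal_im, zero_mul, zero_div]
    ring
  exact pos_of_mul_pos_left (neg_lt_zero.mp (hGw ▸ hG))
    (div_nonneg (sq_nonneg _) (normSq_nonneg _))

theorem stmt5_general (μ : Measure ℝ) [IsProbabilityMeasure μ]
    (hnotpoint : ∀ t : ℝ, μ ≠ Measure.dirac t)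
    (α : ℝ) (c : ℝ)
    (hc : ∃ w : ℂ, w.im ≠ 0 ∧ w * cauchyT μ (w + c) = ((1 - α : ℝ) : ℂ)) :
    (μ {c}).toReal < 1 - α := by
  obtain ⟨w, hw, hwG⟩ := hc
  have hwc : (w + c).im ≠ 0 := by simpa using hw
  have hw0 : w ≠ 0 := by rintro rfl; simp at hw
  have hrest : w * cauchyT (μ.restrict {c}ᶜ) (w + c) = ((1 - α - μ.real {c} : ℝ) : ℂ) := by
    rw [cauchyT_eq_add_cauchyT_restrict_compl_singleton μ hwc c, add_sub_cancel_right] at hwG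
    rw [mul_add, mul_left_comm, mul_inv_cancel₀ hw0, mul_one] at hwG
    push_cast at hwG ⊢
    linear_combination hwG
  have hsign := im_cauchyT_mul_im_neg (restrict_compl_singleton_ne_zero (hnotpoint c)) hwc
  rw [add_im, ofReal_im, add_zero] at hsign
  exact sub_pos.mp (pos_of_mul_eq_ofReal_of_im_mul_im_neg hrest hsign)

theorem stmt5 (μ : Measure ℝ) [IsProbabilityMeasure μ]
    (hcomp : ∃ K : Set ℝ, IsCompact K ∧ μ Kᶜ = 0)
    (hnotpoint : ∀ t : ℝ, μ ≠ Measure.dirac t)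
    (α : ℝ) (hα : α ∈ Set.Ioo (0 : ℝ) 1) (c : ℝ)
    (hc : ∃ w : ℂ, w.im ≠ 0 ∧ w * cauchyT μ (w + c) = ((1 - α : ℝ) : ℂ)) :
    (μ {c}).toReal < 1 - α :=
  stmt5_general μ hnotpoint α c hc
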